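/- arXiv:2211.12179 — 5 statements merged into one kernel-verified Lean document; each statement's English description precedes it below -/
import Mathlib

section
/- If a capacitated, edge-weighted graph G contains a proper M-augmenting trail T (an M-alternating trail with w(T \ M) > w(T ∩ M) whose endpoints u, v satisfy the degree conditions d_u^{T △ M} ≤ c_u and d_v^{T △ M} ≤ c_v), then M △ T is a c-matching of G with strictly larger weight than M; in particular M is not a maximum-weight c-matching. -/
variable {V : Type*}

/-- Degree of a vertex with respect to an edge set. -/
def degOn [DecidableEq V] (M : Finset (Sym2 V)) (v : V) : ℕ :=
  (M.filter (fun e => v ∈ e)).card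

/-- Total weight of an edge set. -/
def wsum (w : Sym2 V → ℝ) (M : Finset (Sym2 V)) : ℝ := ∑ e ∈ M, w e

/-- A `c`-matching: a set of edges of `G` with every vertex degree at most its capacity. -/
def IsCMatching [DecidableEq V] (G : SimpleGraph V) (c : V → ℕ) (M : Finset (Sym2 V)) : Prop :=
  (∀ e ∈ M, e ∈ G.edgeSet) ∧ ∀ v, degOn M v ≤ c v

/-- A maximum-weight `c`-matching. -/
def IsMaxCMatching [DecidableEq V] (G : SimpleGraph V) (w : Sym2 V → ℝ) (c : V → ℕ)
    (M : Finset (Sym2 V)) : Prop :=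
  IsCMatching G c M ∧ ∀ N, IsCMatching G c N → wsum w N ≤ wsum w M

/-- A list of edges is `M`-alternating if consecutive edges alternate
between `M` and its complement. -/
def Alternating [DecidableEq V] (M : Finset (Sym2 V)) (l : List (Sym2 V)) : Prop :=
  l.Chain' (fun e f => (e ∈ M ↔ f ∉ M))

/-- Weight (with multiplicity) of the matched edges of a list. -/
def matchedWeight [DecidableEq V] (w : Sym2 V → ℝ) (M : Finset (Sym2 V))
    (l : List (Sym2 V)) : ℝ :=
  ((l.filter (fun e => decide (e ∈ M))).map w).sum

/-- Weight (with multiplicity) of the unmatched edges of a list. -/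
def unmatchedWeight [DecidableEq V] (w : Sym2 V → ℝ) (M : Finset (Sym2 V))
    (l : List (Sym2 V)) : ℝ :=
  ((l.filter (fun e => decide (e ∉ M))).map w).sum

/-- `M`-augmenting: `w(l \ M) > w(l ∩ M)` (multiplicities counted). -/
def Augmenting [DecidableEq V] (w : Sym2 V → ℝ) (M : Finset (Sym2 V)) (l : List (Sym2 V)) : Prop :=
  matchedWeight w M l < unmatchedWeight w M l

/-- Fractional degree `Σ_{e ∈ δ(v)} x_e`. -/
def lpDeg [Fintype V] [DecidableEq V] (x : Sym2 V → ℝ) (v : V) : ℝ :=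
  ∑ e : Sym2 V, if v ∈ e then x e else 0

/-- A fractional `c`-matching. -/
def IsFracCMatching [Fintype V] [DecidableEq V] (G : SimpleGraph V) (c : V → ℕ)
    (x : Sym2 V → ℝ) : Prop :=
  (∀ e, 0 ≤ x e ∧ x e ≤ 1) ∧ (∀ e, e ∉ G.edgeSet → x e = 0) ∧ ∀ v, lpDeg x v ≤ (c v : ℝ)

/-- LP objective value `w^T x`. -/
def lpVal [Fintype V] (w x : Sym2 V → ℝ) : ℝ := ∑ e : Sym2 V, w e * x e

/-- `ν^c(G)`: maximum weight of a `c`-matching. -/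
noncomputable def nuC [Fintype V] [DecidableEq V] (G : SimpleGraph V) (w : Sym2 V → ℝ)
    (c : V → ℕ) : ℝ :=
  sSup {r | ∃ M, IsCMatching G c M ∧ r = wsum w M}

/-- `ν_f^c(G)`: optimum of the fractional `c`-matching LP. -/
noncomputable def nuF [Fintype V] [DecidableEq V] (G : SimpleGraph V) (w : Sym2 V → ℝ)
    (c : V → ℕ) : ℝ :=
  sSup {r | ∃ x, IsFracCMatching G c x ∧ r = lpVal w x}

/-- A capacitated graph is stable if `ν^c(G) = ν_f^c(G)`. -/
def Stable [Fintype V] [DecidableEq V] (G : SimpleGraph V) (w : Sym2 V → ℝ) (c : V → ℕ) : Prop :=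
  nuC G w c = nuF G w c

/-- The ε-augmentation `x^{M/W}(ε)` of a walk. -/
def epsAug [DecidableEq V] {G : SimpleGraph V} {u v : V} (M : Finset (Sym2 V))
    (p : G.Walk u v) (ε : ℝ) : Sym2 V → ℝ :=
  fun e => if e ∈ M then 1 - (p.edges.count e : ℝ) * ε else (p.edges.count e : ℝ) * ε

/-- Symmetric difference of edge sets. -/
def symmDiffE [DecidableEq V] (M T : Finset (Sym2 V)) : Finset (Sym2 V) := (M \ T) ∪ (T \ M)

/-! Exchanging `M` along an alternating trail `T` changes the degree of a vertex `x` by the number of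
unmatched minus the number of matched trail edges at `x`. Every passage of the trail through `x`
uses two consecutive, hence one matched and one unmatched, edges; so only the ends of the trail can
gain degree. The weight grows by `w(T \ M) - w(T ∩ M) > 0`. -/

section SymmDiff

variable [DecidableEq V]

lemma degOn_union_of_disjoint {A B : Finset (Sym2 V)} (h : Disjoint A B) (x : V) :
    degOn (A ∪ B) x = degOn A x + degOn B x := by
  rw [degOn, Finset.filter_union, Finset.card_union_of_disjoint (Finset.disjoint_filter_filter h)]
  rfl

lemma wsum_union_of_disjoint (w : Sym2 V → ℝ) {A B : Finset (Sym2 V)} (h : Disjoint A B) :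
    wsum w (A ∪ B) = wsum w A + wsum w B :=
  Finset.sum_union h

lemma degOn_symmDiffE_le (M T : Finset (Sym2 V)) {x : V}
    (h : degOn (T \ M) x ≤ degOn (T ∩ M) x) : degOn (symmDiffE M T) x ≤ degOn M x := by
  have hM : degOn M x = degOn (M \ T) x + degOn (T ∩ M) x := by
    rw [Finset.inter_comm T M, ← degOn_union_of_disjoint (Finset.disjoint_sdiff_inter M T),
      Finset.sdiff_union_inter]
  rw [symmDiffE, degOn_union_of_disjoint disjoint_sdiff_sdiff, hM]
  omega

lemma wsum_lt_wsum_symmDiffE (w : Sym2 V → ℝ) (M T : Finset (Sym2 V))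
    (h : wsum w (T ∩ M) < wsum w (T \ M)) : wsum w M < wsum w (symmDiffE M T) := by
  have hM : wsum w M = wsum w (M \ T) + wsum w (T ∩ M) := by
    rw [Finset.inter_comm T M, ← wsum_union_of_disjoint w (Finset.disjoint_sdiff_inter M T),
      Finset.sdiff_union_inter]
  rw [symmDiffE, wsum_union_of_disjoint w disjoint_sdiff_sdiff, hM]
  linarith

lemma IsCMatching.symmDiffE {G : SimpleGraph V} {c : V → ℕ} {M T : Finset (Sym2 V)}
    (hM : IsCMatching G c M) (hT : ∀ e ∈ T, e ∈ G.edgeSet) {u v : V}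
    (hinner : ∀ x, x ≠ u → x ≠ v → degOn (T \ M) x ≤ degOn (T ∩ M) x)
    (hu : degOn (symmDiffE M T) u ≤ c u) (hv : degOn (symmDiffE M T) v ≤ c v) :
    IsCMatching G c (symmDiffE M T) := by
  refine ⟨fun e he => ?_, fun x => ?_⟩
  · rcases Finset.mem_union.1 he with he | he
    · exact hM.1 e (Finset.mem_sdiff.1 he).1
    · exact hT e (Finset.mem_sdiff.1 he).1
  · by_cases hxu : x = u
    · exact hxu ▸ hu
    by_cases hxv : x = v
    · exact hxv ▸ hv
    exact (degOn_symmDiffE_le M T (hinner x hxu hxv)).trans (hM.2 x)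

end SymmDiff

section EdgeLists

variable [DecidableEq V] (M : Finset (Sym2 V))

lemma degOn_toFinset_filter {l : List (Sym2 V)} (hl : l.Nodup) (P : Sym2 V → Prop)
    [DecidablePred P] (x : V) :
    degOn (l.toFinset.filter P) x = l.countP (fun e => decide (x ∈ e ∧ P e)) := by
  rw [degOn, Finset.filter_filter, List.countP_eq_length_filter,
    ← List.toFinset_card_of_nodup (hl.filter _), List.toFinset_filter]
  congr 1
  ext e
  simp [and_comm]

lemma degOn_toFinset_sdiff {l : List (Sym2 V)} (hl : l.Nodup) (x : V) :
    degOn (l.toFinset \ M) x = l.countP (fun e => decide (x ∈ e ∧ e ∉ M)) := by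
  rw [Finset.sdiff_eq_filter, degOn_toFinset_filter hl]

lemma degOn_toFinset_inter {l : List (Sym2 V)} (hl : l.Nodup) (x : V) :
    degOn (l.toFinset ∩ M) x = l.countP (fun e => decide (x ∈ e ∧ e ∈ M)) := by
  rw [← Finset.filter_mem_eq_inter, degOn_toFinset_filter hl]

lemma matchedWeight_eq_wsum_inter (w : Sym2 V → ℝ) {l : List (Sym2 V)} (hl : l.Nodup) :
    matchedWeight w M l = wsum w (l.toFinset ∩ M) := by
  rw [matchedWeight, ← List.sum_toFinset _ (hl.filter _), List.toFinset_filter, wsum,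
    ← Finset.filter_mem_eq_inter]
  simp only [decide_eq_true_eq]

lemma unmatchedWeight_eq_wsum_sdiff (w : Sym2 V → ℝ) {l : List (Sym2 V)} (hl : l.Nodup) :
    unmatchedWeight w M l = wsum w (l.toFinset \ M) := by
  rw [unmatchedWeight, ← List.sum_toFinset _ (hl.filter _), List.toFinset_filter, wsum,
    Finset.sdiff_eq_filter]
  simp only [decide_eq_true_eq]

def edgeSign (e : Sym2 V) : ℤ := if e ∈ M then -1 else 1

def headSign : List (Sym2 V) → ℤ
  | [] => 0
  | e :: _ => edgeSign M e

/-- The change of the degree of `x` under `M ↦ M △ l`, for `l` without repeated edges. -/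
def degExcess (x : V) (l : List (Sym2 V)) : ℤ :=
  l.countP (fun e => decide (x ∈ e ∧ e ∉ M)) - l.countP (fun e => decide (x ∈ e ∧ e ∈ M))

lemma degExcess_cons (x : V) (e : Sym2 V) (l : List (Sym2 V)) :
    degExcess M x (e :: l) = degExcess M x l + if x ∈ e then edgeSign M e else 0 := by
  by_cases hx : x ∈ e <;> by_cases he : e ∈ M <;>
    simp [degExcess, edgeSign, hx, he] <;> ring

/-- Stated with the start vertex included, so that the induction can step past it. -/
lemma degExcess_le_of_alternating {G : SimpleGraph V} {u v : V} (p : G.Walk u v)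
    (halt : Alternating M p.edges) {x : V} (hxv : x ≠ v) :
    degExcess M x p.edges ≤ if x = u then headSign M p.edges else 0 := by
  induction p with
  | nil => simp [degExcess, hxv]
  | @cons a b v' hab q ih =>
    rw [SimpleGraph.Walk.edges_cons] at halt ⊢
    rw [degExcess_cons, headSign]
    by_cases hxb : x = b
    · subst hxb
      cases q with
      | nil => exact absurd rfl hxv
      | @cons _ c _ hxc q' =>
        rw [SimpleGraph.Walk.edges_cons] at halt ih ⊢
        have hsign : edgeSign M s(x, c) = -edgeSign M s(a, x) := by
          have := List.rel_of_isChain_cons_cons halt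
          by_cases hm : s(a, x) ∈ M <;> simp_all [edgeSign]
        have hq := ih halt.tail hxv
        rw [if_pos rfl, headSign, hsign] at hq
        rw [if_pos (Sym2.mem_mk_right a x), if_neg hab.ne.symm]
        omega
    · have hq := ih halt.tail hxv
      rw [if_neg hxb] at hq
      by_cases hxa : x = a
      · rw [if_pos (hxa ▸ Sym2.mem_mk_left x b), if_pos hxa]
        omega
      · rw [if_neg (by simp [Sym2.mem_iff, hxa, hxb]), if_neg hxa]
        omega

variable {M} in
lemma Alternating.countP_unmatched_le_countP_matched {G : SimpleGraph V} {u v : V}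
    {p : G.Walk u v} (halt : Alternating M p.edges) {x : V} (hxu : x ≠ u) (hxv : x ≠ v) :
    p.edges.countP (fun e => decide (x ∈ e ∧ e ∉ M)) ≤
      p.edges.countP (fun e => decide (x ∈ e ∧ e ∈ M)) := by
  have := degExcess_le_of_alternating M p halt hxv
  rw [if_neg hxu, degExcess] at this
  omega

end EdgeLists

theorem stmt0_general [DecidableEq V] (G : SimpleGraph V) (w : Sym2 V → ℝ)
    (c : V → ℕ) (M : Finset (Sym2 V)) (hM : IsCMatching G c M)
    {u v : V} (p : G.Walk u v) (htrail : p.IsTrail)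
    (halt : Alternating M p.edges) (haug : Augmenting w M p.edges)
    (hu : degOn (symmDiffE M p.edges.toFinset) u ≤ c u)
    (hv : degOn (symmDiffE M p.edges.toFinset) v ≤ c v) :
    IsCMatching G c (symmDiffE M p.edges.toFinset) ∧
      wsum w M < wsum w (symmDiffE M p.edges.toFinset) ∧
      ¬ IsMaxCMatching G w c M := by
  have hnd := htrail.edges_nodup
  have hmatch : IsCMatching G c (symmDiffE M p.edges.toFinset) := by
    refine hM.symmDiffE (fun e he => p.edges_subset_edgeSet (List.mem_toFinset.1 he))
      (fun x hxu hxv => ?_) hu hv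
    rw [degOn_toFinset_sdiff M hnd, degOn_toFinset_inter M hnd]
    exact halt.countP_unmatched_le_countP_matched hxu hxv
  have hlt : wsum w M < wsum w (symmDiffE M p.edges.toFinset) := by
    apply wsum_lt_wsum_symmDiffE
    rwa [Augmenting, matchedWeight_eq_wsum_inter M w hnd,
      unmatchedWeight_eq_wsum_sdiff M w hnd] at haug
  exact ⟨hmatch, hlt, fun hmax => (hmax.2 _ hmatch).not_gt hlt⟩

/-- a proper `M`-augmenting trail yields the strictly heavier `c`-matching `M △ T`;
in particular `M` is not maximum-weight. -/
theorem stmt0 [Fintype V] [DecidableEq V] (G : SimpleGraph V) (w : Sym2 V → ℝ)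
    (hw : ∀ e, 0 ≤ w e) (c : V → ℕ) (M : Finset (Sym2 V)) (hM : IsCMatching G c M)
    {u v : V} (p : G.Walk u v) (htrail : p.IsTrail)
    (halt : Alternating M p.edges) (haug : Augmenting w M p.edges)
    (hu : degOn (symmDiffE M p.edges.toFinset) u ≤ c u)
    (hv : degOn (symmDiffE M p.edges.toFinset) v ≤ c v) :
    IsCMatching G c (symmDiffE M p.edges.toFinset) ∧
      wsum w M < wsum w (symmDiffE M p.edges.toFinset) ∧
      ¬ IsMaxCMatching G w c M :=
  stmt0_general G w c M hM p htrail halt haug hu hv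
end

section
/- Given a capacitated graph G with maximum-weight c-matching M and auxiliary unit-capacity graph [(G', w', 1), M'], every proper M'-augmenting path and every M'-augmenting cycle in G' contains a tie. Equivalently, if G' contains a tieless proper M'-augmenting path or a tieless M'-augmenting cycle, then M is not maximum-weight in G. -/
variable {V : Type*}

/-- A tie: two distinct unmatched edges of the list with the same projection to `G`
(i.e. joining copies of the same pair of original vertices). -/
def HasTie {V : Type*} [DecidableEq V] {c : V → ℕ}
    (M' : Finset (Sym2 (Σ v : V, Fin (c v)))) (l : List (Sym2 (Σ v : V, Fin (c v)))) : Prop :=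
  ∃ e ∈ l, ∃ f ∈ l, e ≠ f ∧ e ∉ M' ∧ f ∉ M' ∧
    Sym2.map (fun a : Σ v : V, Fin (c v) => a.1) e =
      Sym2.map (fun a : Σ v : V, Fin (c v) => a.1) f

/-! If `l` is an `M'`-alternating path or even cycle, `M' ∆ l` is again a matching of the
unit-capacity graph `G'`: at each inner vertex of `l` one matched edge is exchanged for an
unmatched one. Projecting to `G` merges the `c v` copies of `v`, so the projection has degree
at most `c v` at `v`. Without a tie no two edges of `M' ∆ l` have the same projection, so the
projection is a `c`-matching of `G` of weight `w(M) - w(l ∩ M') + w(l \ M') > w(M)`. -/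

open SimpleGraph

section SymmDiff

variable {α : Type*} [DecidableEq α] {M T : Finset (Sym2 α)} {x : α}

lemma degOn_symmDiffE_insert_of_notMem {e : Sym2 α} (hx : x ∉ e) :
    degOn (symmDiffE M (insert e T)) x = degOn (symmDiffE M T) x := by
  unfold degOn symmDiffE
  congr 1
  ext f
  by_cases hf : f = e
  · subst hf; simp [hx]
  · simp [hf]

lemma degOn_symmDiffE_le_one_of_alternating_pair {e₀ e₁ : Sym2 α} (hM : degOn M x ≤ 1)
    (hT : ∀ f ∈ T, x ∈ f → f = e₀ ∨ f = e₁) (he₀ : e₀ ∈ T) (he₁ : e₁ ∈ T)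
    (hx₀ : x ∈ e₀) (hx₁ : x ∈ e₁) (halt : e₀ ∈ M ↔ e₁ ∉ M) :
    degOn (symmDiffE M T) x ≤ 1 := by
  obtain ⟨m, n, hmT, hxm, hmM, hnM, hTx⟩ : ∃ m n, m ∈ T ∧ x ∈ m ∧ m ∈ M ∧ n ∉ M ∧
      ∀ f ∈ T, x ∈ f → f = m ∨ f = n := by
    by_cases h : e₀ ∈ M
    · exact ⟨e₀, e₁, he₀, hx₀, h, halt.mp h, hT⟩
    · exact ⟨e₁, e₀, he₁, hx₁, by tauto, h, fun f hf hxf => (hT f hf hxf).symm⟩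
  have hsub : (symmDiffE M T).filter (x ∈ ·) ⊆ {n} := by
    intro f hf
    simp only [symmDiffE, Finset.mem_filter, Finset.mem_union, Finset.mem_sdiff] at hf
    obtain ⟨⟨hfM, hfT⟩ | ⟨hfT, hfM⟩, hxf⟩ := hf
    · have : f = m := Finset.card_le_one.mp hM f (by simp [hfM, hxf]) m (by simp [hmM, hxm])
      exact absurd (this ▸ hmT) hfT
    · rcases hTx f hfT hxf with rfl | rfl
      · exact absurd hmM hfM
      · exact Finset.mem_singleton_self f
  exact (Finset.card_le_card hsub).trans_eq (Finset.card_singleton n)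

lemma wsum_symmDiffE_add_wsum_inter (w : Sym2 α → ℝ) (M T : Finset (Sym2 α)) :
    wsum w (symmDiffE M T) + wsum w (M ∩ T) = wsum w M + wsum w (T \ M) := by
  unfold wsum symmDiffE
  rw [Finset.sum_union disjoint_sdiff_sdiff, add_comm (∑ e ∈ M \ T, w e),
    add_assoc, ← Finset.sum_union (Finset.disjoint_sdiff_inter M T), Finset.sdiff_union_inter,
    add_comm]

end SymmDiff

section Alternating

variable {α : Type*} [DecidableEq α] {M : Finset (Sym2 α)} {e : Sym2 α} {l : List (Sym2 α)}

lemma Alternating.of_cons (h : Alternating M (e :: l)) : Alternating M l :=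
  List.IsChain.tail h

lemma Alternating.mem_iff_head_notMem (h : Alternating M (e :: l)) (hl : l ≠ []) :
    e ∈ M ↔ l.head hl ∉ M := by
  obtain ⟨f, l, rfl⟩ := List.exists_cons_of_ne_nil hl
  exact (List.isChain_cons_cons.mp h).1

lemma Alternating.mem_iff_getLast_mem (h : Alternating M (e :: l)) :
    e ∈ M ↔ (Even l.length ↔ (e :: l).getLast (List.cons_ne_nil e l) ∈ M) := by
  induction l generalizing e with
  | nil => simp
  | cons f l ih =>
    have hef := h.mem_iff_head_notMem (List.cons_ne_nil f l)
    have hf := ih h.of_cons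
    simp only [List.head_cons] at hef
    rw [List.getLast_cons (List.cons_ne_nil f l), List.length_cons, Nat.even_add_one]
    tauto

end Alternating

namespace SimpleGraph.Walk

variable {α : Type*} {G : SimpleGraph α} {u v x : α}

lemma IsPath.eq_head_of_mem_edges {p : G.Walk u v} (hp : p.IsPath) {f : Sym2 α}
    (hf : f ∈ p.edges) (hu : u ∈ f) : f = p.edges.head (List.ne_nil_of_mem hf) := by
  cases p with
  | nil => simp at hf
  | cons h q =>
    rcases List.mem_cons.mp hf with rfl | hf
    · rfl
    · exact absurd (q.mem_support_of_mem_edges hf hu) ((cons_isPath_iff h q).mp hp).2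

lemma IsPath.eq_getLast_of_mem_edges {p : G.Walk u v} (hp : p.IsPath) {f : Sym2 α}
    (hf : f ∈ p.edges) (hv : v ∈ f) : f = p.edges.getLast (List.ne_nil_of_mem hf) := by
  have := hp.reverse.eq_head_of_mem_edges (by simpa using hf) hv
  simpa [List.head_reverse] using this

variable [DecidableEq α] {M : Finset (Sym2 α)}

lemma degOn_symmDiffE_cons_le_one (hM : degOn M x ≤ 1) (h : G.Adj u x) {p : G.Walk x v}
    (hp : p.IsPath) (hnil : p.edges ≠ []) (halt : Alternating M (cons h p).edges) :
    degOn (symmDiffE M (cons h p).edges.toFinset) x ≤ 1 := by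
  rw [edges_cons] at halt ⊢
  refine degOn_symmDiffE_le_one_of_alternating_pair hM (e₁ := p.edges.head hnil) ?_ (by simp)
    (List.mem_toFinset.mpr (.tail _ (List.head_mem hnil))) (by simp)
    (by rw [head_edges_eq_mk_start_snd]; exact Sym2.mem_mk_left _ _)
    (halt.mem_iff_head_notMem hnil)
  intro f hf hxf
  rcases List.mem_cons.mp (List.mem_toFinset.mp hf) with rfl | hf
  · exact Or.inl rfl
  · exact Or.inr (hp.eq_head_of_mem_edges hf hxf)

lemma IsPath.degOn_symmDiffE_le_one (hM : ∀ y, degOn M y ≤ 1) {p : G.Walk u v}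
    (hp : p.IsPath) (halt : Alternating M p.edges) (hxu : x ≠ u) (hxv : x ≠ v) :
    degOn (symmDiffE M p.edges.toFinset) x ≤ 1 := by
  induction p with
  | nil => simpa [symmDiffE] using hM x
  | @cons u b v h q ih =>
    by_cases hxb : x = b
    · subst hxb
      have hnil : q.edges ≠ [] := fun hq => hxv (q.eq_of_length_eq_zero (by simpa using hq))
      exact degOn_symmDiffE_cons_le_one (hM x) h hp.of_cons hnil halt
    · have hx : x ∉ s(u, b) := by simp [hxu, hxb]
      rw [edges_cons, List.toFinset_cons, degOn_symmDiffE_insert_of_notMem hx]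
      exact ih hp.of_cons (Alternating.of_cons halt) hxb hxv

lemma IsCycle.degOn_symmDiffE_le_one (hM : ∀ y, degOn M y ≤ 1) {q : G.Walk u u}
    (hq : q.IsCycle) (heven : Even q.length) (halt : Alternating M q.edges) (x : α) :
    degOn (symmDiffE M q.edges.toFinset) x ≤ 1 := by
  cases q with
  | nil => exact absurd rfl hq.ne_nil
  | @cons _ b _ h r =>
    have hr : r.IsPath := ((cons_isCycle_iff r h).mp hq).1
    have hnil : r.edges ≠ [] := fun hr' =>
      G.loopless.irrefl _ (r.eq_of_length_eq_zero (by simpa using hr') ▸ h)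
    by_cases hxu : x = u
    · subst hxu
      rw [edges_cons] at halt ⊢
      have hodd : ¬ Even r.edges.length := by simpa [Nat.even_add_one] using heven
      have hlast := halt.mem_iff_getLast_mem
      rw [List.getLast_cons hnil] at hlast
      refine degOn_symmDiffE_le_one_of_alternating_pair (hM x) (e₀ := s(x, b))
        (e₁ := r.edges.getLast hnil) ?_ (by simp)
        (List.mem_toFinset.mpr (.tail _ (List.getLast_mem hnil))) (by simp) ?_ (by tauto)
      · intro f hf hxf
        rcases List.mem_cons.mp (List.mem_toFinset.mp hf) with rfl | hf
        · exact Or.inl rfl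
        · exact Or.inr (hr.eq_getLast_of_mem_edges hf hxf)
      · rw [getLast_edges_eq_mk_penultimate_end]
        exact Sym2.mem_mk_right _ _
    by_cases hxb : x = b
    · subst hxb
      exact degOn_symmDiffE_cons_le_one (hM x) h hr hnil halt
    · have hx : x ∉ s(u, b) := by simp [hxu, hxb]
      rw [edges_cons, List.toFinset_cons, degOn_symmDiffE_insert_of_notMem hx]
      exact hr.degOn_symmDiffE_le_one hM (Alternating.of_cons halt) hxb hxu

end SimpleGraph.Walk

section Weights

variable {α : Type*} [DecidableEq α] (w : Sym2 α → ℝ) (M : Finset (Sym2 α))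
  {l : List (Sym2 α)}

lemma matchedWeight_eq_wsum (hl : l.Nodup) :
    matchedWeight w M l = wsum w (M ∩ l.toFinset) := by
  rw [matchedWeight, ← List.sum_toFinset _ (hl.filter _), List.toFinset_filter, wsum,
    Finset.inter_comm]
  simp only [decide_eq_true_eq, Finset.filter_mem_eq_inter]

lemma unmatchedWeight_eq_wsum (hl : l.Nodup) :
    unmatchedWeight w M l = wsum w (l.toFinset \ M) := by
  rw [unmatchedWeight, ← List.sum_toFinset _ (hl.filter _), List.toFinset_filter, wsum,
    Finset.sdiff_eq_filter]
  simp only [decide_eq_true_eq]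

end Weights

section Projection

variable [DecidableEq V] {c : V → ℕ} {G : SimpleGraph V}
  {G' : SimpleGraph (Σ v : V, Fin (c v))}

lemma degOn_image_fst_le (N : Finset (Sym2 (Σ v : V, Fin (c v)))) (v : V) :
    degOn (N.image (Sym2.map Sigma.fst)) v ≤ ∑ i : Fin (c v), degOn N ⟨v, i⟩ := by
  have hcopies : N.filter (fun e => v ∈ Sym2.map Sigma.fst e) =
      Finset.univ.biUnion fun i : Fin (c v) => N.filter (⟨v, i⟩ ∈ ·) := by
    ext e
    simp only [Finset.mem_filter, Finset.mem_biUnion, Finset.mem_univ, true_and, Sym2.mem_map,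
      Sigma.exists]
    constructor
    · rintro ⟨he, _, i, hi, rfl⟩
      exact ⟨i, he, hi⟩
    · rintro ⟨i, he, hi⟩
      exact ⟨he, v, i, hi, rfl⟩
  unfold degOn
  calc ((N.image (Sym2.map Sigma.fst)).filter (v ∈ ·)).card
      = ((N.filter (fun e => v ∈ Sym2.map Sigma.fst e)).image (Sym2.map Sigma.fst)).card := by
        rw [Finset.filter_image]
    _ ≤ (N.filter (fun e => v ∈ Sym2.map Sigma.fst e)).card := Finset.card_image_le
    _ ≤ _ := hcopies ▸ Finset.card_biUnion_le

lemma IsCMatching.image_fst {N : Finset (Sym2 (Σ v : V, Fin (c v)))}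
    (hN : IsCMatching G' (fun _ => 1) N)
    (hproj : ∀ e ∈ G'.edgeSet, Sym2.map Sigma.fst e ∈ G.edgeSet) :
    IsCMatching G c (N.image (Sym2.map Sigma.fst)) := by
  refine ⟨fun e he => ?_, fun v => ?_⟩
  · obtain ⟨e', he', rfl⟩ := Finset.mem_image.mp he
    exact hproj e' (hN.1 e' he')
  · calc degOn (N.image (Sym2.map Sigma.fst)) v ≤ ∑ i : Fin (c v), degOn N ⟨v, i⟩ :=
          degOn_image_fst_le N v
      _ ≤ ∑ _i : Fin (c v), 1 := Finset.sum_le_sum fun i _ => hN.2 ⟨v, i⟩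
      _ = c v := by simp

/-- Two edges of `M' ∆ l` with the same projection cannot both lie in `M'` (which projects
injectively), nor one in `M'` and one in `l \ M'` (which avoids the projection of `M'`);
so both lie in `l \ M'` and form a tie. -/
lemma injOn_fst_symmDiffE_of_not_hasTie {M' : Finset (Sym2 (Σ v : V, Fin (c v)))}
    {l : List (Sym2 (Σ v : V, Fin (c v)))}
    (hlM' : ∀ f ∈ l, Sym2.map Sigma.fst f ∈ M'.image (Sym2.map Sigma.fst) → f ∈ M')
    (hM'inj : Set.InjOn (Sym2.map Sigma.fst) (M' : Set (Sym2 (Σ v : V, Fin (c v)))))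
    (hnt : ¬ HasTie M' l) :
    Set.InjOn (Sym2.map Sigma.fst)
      (symmDiffE M' l.toFinset : Set (Sym2 (Σ v : V, Fin (c v)))) := by
  intro e he f hf hef
  simp only [symmDiffE, Finset.coe_union, Finset.coe_sdiff, Set.mem_union, Set.mem_sdiff,
    Finset.mem_coe, List.mem_toFinset] at he hf
  rcases he with ⟨heM, -⟩ | ⟨hel, heM⟩ <;> rcases hf with ⟨hfM, -⟩ | ⟨hfl, hfM⟩
  · exact hM'inj heM hfM hef
  · exact absurd (hlM' f hfl (hef ▸ Finset.mem_image_of_mem _ heM)) hfM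
  · exact absurd (hlM' e hel (hef.symm ▸ Finset.mem_image_of_mem _ hfM)) heM
  · by_contra hne
    exact hnt ⟨e, hel, f, hfl, hne, heM, hfM, hef⟩

theorem hasTie_of_augmenting {w : Sym2 V → ℝ} {M : Finset (Sym2 V)}
    {M' : Finset (Sym2 (Σ v : V, Fin (c v)))} {l : List (Sym2 (Σ v : V, Fin (c v)))}
    (hMmax : IsMaxCMatching G w c M) (hM'G : ∀ e ∈ M', e ∈ G'.edgeSet)
    (hproj : ∀ e ∈ G'.edgeSet, Sym2.map Sigma.fst e ∈ G.edgeSet)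
    (hmatched : ∀ e ∈ G'.edgeSet, Sym2.map Sigma.fst e ∈ M → e ∈ M')
    (hMproj : M'.image (Sym2.map Sigma.fst) = M)
    (hM'inj : Set.InjOn (Sym2.map Sigma.fst) (M' : Set (Sym2 (Σ v : V, Fin (c v)))))
    (hl : l.Nodup) (hlG : ∀ e ∈ l, e ∈ G'.edgeSet)
    (haug : Augmenting (fun e => w (Sym2.map Sigma.fst e)) M' l)
    (hdeg : ∀ x, degOn (symmDiffE M' l.toFinset) x ≤ 1) :
    HasTie M' l := by
  by_contra hnt
  set N' := symmDiffE M' l.toFinset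
  have hN' : IsCMatching G' (fun _ => 1) N' := by
    refine ⟨fun e he => ?_, hdeg⟩
    rcases Finset.mem_union.mp he with he | he
    · exact hM'G e (Finset.mem_sdiff.mp he).1
    · exact hlG e (List.mem_toFinset.mp (Finset.mem_sdiff.mp he).1)
  have hinj := injOn_fst_symmDiffE_of_not_hasTie
    (fun f hf hfM => hmatched f (hlG f hf) (hMproj ▸ hfM)) hM'inj hnt
  have hexchange : wsum w (N'.image (Sym2.map Sigma.fst)) +
      matchedWeight (fun e => w (Sym2.map Sigma.fst e)) M' l =
      wsum w M + unmatchedWeight (fun e => w (Sym2.map Sigma.fst e)) M' l := by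
    rw [wsum, Finset.sum_image hinj, ← hMproj, wsum, Finset.sum_image hM'inj,
      matchedWeight_eq_wsum _ _ hl, unmatchedWeight_eq_wsum _ _ hl]
    exact wsum_symmDiffE_add_wsum_inter _ M' l.toFinset
  have hle := hMmax.2 _ (hN'.image_fst hproj)
  unfold Augmenting at haug
  linarith

end Projection

theorem stmt4_general [DecidableEq V] (G : SimpleGraph V) (w : Sym2 V → ℝ) (c : V → ℕ)
    (M : Finset (Sym2 V)) (hMmax : IsMaxCMatching G w c M)
    (G' : SimpleGraph (Σ v : V, Fin (c v))) (M' : Finset (Sym2 (Σ v : V, Fin (c v))))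
    (hM' : IsCMatching G' (fun _ => 1) M')
    -- edges of `G'` project to edges of `G`
    (hproj : ∀ e ∈ G'.edgeSet, Sym2.map (fun a : Σ v : V, Fin (c v) => a.1) e ∈ G.edgeSet)
    -- an edge of `G'` is in `M'` iff its projection is in `M`
    (hIff : ∀ e ∈ G'.edgeSet,
      (e ∈ M' ↔ Sym2.map (fun a : Σ v : V, Fin (c v) => a.1) e ∈ M))
    -- `M'` projects bijectively onto `M`
    (hMproj : M'.image (Sym2.map (fun a : Σ v : V, Fin (c v) => a.1)) = M)
    (hMinj : ∀ e₁ ∈ M', ∀ e₂ ∈ M',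
      Sym2.map (fun a : Σ v : V, Fin (c v) => a.1) e₁ =
        Sym2.map (fun a : Σ v : V, Fin (c v) => a.1) e₂ → e₁ = e₂) :
    -- every proper `M'`-augmenting path contains a tie
    (∀ (a b : Σ v : V, Fin (c v)) (p : G'.Walk a b), p.IsPath →
        Alternating M' p.edges →
        Augmenting (fun e => w (Sym2.map (fun a : Σ v : V, Fin (c v) => a.1) e)) M' p.edges →
        degOn (symmDiffE M' p.edges.toFinset) a ≤ 1 →
        degOn (symmDiffE M' p.edges.toFinset) b ≤ 1 →
        HasTie M' p.edges) ∧
    -- every `M'`-augmenting cycle contains a tie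
    (∀ (a : Σ v : V, Fin (c v)) (q : G'.Walk a a), q.IsCycle → Even q.length →
        Alternating M' q.edges →
        Augmenting (fun e => w (Sym2.map (fun a : Σ v : V, Fin (c v) => a.1) e)) M' q.edges →
        HasTie M' q.edges) := by
  have key := fun l => hasTie_of_augmenting (l := l) hMmax hM'.1 hproj
    (fun e he => (hIff e he).2) hMproj hMinj
  refine ⟨fun a b p hp halt haug hda hdb => ?_, fun a q hq heven halt haug => ?_⟩
  · refine key _ hp.isTrail.edges_nodup (fun _ he => p.edges_subset_edgeSet he) haug
      fun x => ?_
    by_cases hxa : x = a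
    · exact hxa ▸ hda
    by_cases hxb : x = b
    · exact hxb ▸ hdb
    exact hp.degOn_symmDiffE_le_one hM'.2 halt hxa hxb
  · exact key _ hq.isTrail.edges_nodup (fun _ he => q.edges_subset_edgeSet he) haug
      (hq.degOn_symmDiffE_le_one hM'.2 heven halt)

/-- if `M` is a maximum-weight `c`-matching of `G`, then in the auxiliary
unit-capacity graph `G'` every proper `M'`-augmenting path and every `M'`-augmenting cycle
contains a tie. -/
theorem stmt4 [Fintype V] [DecidableEq V] (G : SimpleGraph V) (w : Sym2 V → ℝ) (c : V → ℕ)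
    (M : Finset (Sym2 V)) (hMmax : IsMaxCMatching G w c M)
    (G' : SimpleGraph (Σ v : V, Fin (c v))) (M' : Finset (Sym2 (Σ v : V, Fin (c v))))
    (hM' : IsCMatching G' (fun _ => 1) M')
    -- edges of `G'` project to edges of `G`
    (hproj : ∀ e ∈ G'.edgeSet, Sym2.map (fun a : Σ v : V, Fin (c v) => a.1) e ∈ G.edgeSet)
    -- an edge of `G'` is in `M'` iff its projection is in `M`
    (hIff : ∀ e ∈ G'.edgeSet,
      (e ∈ M' ↔ Sym2.map (fun a : Σ v : V, Fin (c v) => a.1) e ∈ M))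
    -- `M'` projects bijectively onto `M`
    (hMproj : M'.image (Sym2.map (fun a : Σ v : V, Fin (c v) => a.1)) = M)
    (hMinj : ∀ e₁ ∈ M', ∀ e₂ ∈ M',
      Sym2.map (fun a : Σ v : V, Fin (c v) => a.1) e₁ =
        Sym2.map (fun a : Σ v : V, Fin (c v) => a.1) e₂ → e₁ = e₂) :
    -- every proper `M'`-augmenting path contains a tie
    (∀ (a b : Σ v : V, Fin (c v)) (p : G'.Walk a b), p.IsPath →
        Alternating M' p.edges →
        Augmenting (fun e => w (Sym2.map (fun a : Σ v : V, Fin (c v) => a.1) e)) M' p.edges →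
        degOn (symmDiffE M' p.edges.toFinset) a ≤ 1 →
        degOn (symmDiffE M' p.edges.toFinset) b ≤ 1 →
        HasTie M' p.edges) ∧
    -- every `M'`-augmenting cycle contains a tie
    (∀ (a : Σ v : V, Fin (c v)) (q : G'.Walk a a), q.IsCycle → Even q.length →
        Alternating M' q.edges →
        Augmenting (fun e => w (Sym2.map (fun a : Σ v : V, Fin (c v) => a.1) e)) M' q.edges →
        HasTie M' q.edges) :=
  stmt4_general G w c M hMmax G' M' hM' hproj hIff hMproj hMinj
end

section
/- Let P = (u; e_1,…,e_k; v) be a feasible M-augmenting walk in a capacitated graph G with u ≠ v, both u and v M-unsaturated, such that P traverses some edge twice in opposite directions; let t be the least index with e_t = e_s (s < t) traversed in opposite directions, and decompose P = (P_1, e_s, P_2, e_t, P_3). Then at least one of the tracebacks tb(P,u) = (P_1, e_s, P_2, e_t, P_1^{-1}) and tb(P,v) = (P_3^{-1}, e_t^{-1}, P_2^{-1}, e_s^{-1}, P_3) is M-augmenting; specifically, if w(P_1 \ M) − w(P_1 ∩ M) ≥ w(P_3 \ M) − w(P_3 ∩ M) then tb(P,u) is M-augmenting, and otherwise tb(P,v)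 is M-augmenting. -/
variable {V : Type*}

/-- The list of (undirected) edges underlying a list of darts. -/
def edgesOf {V : Type*} (l : List (V × V)) : List (Sym2 V) := l.map (fun d => s(d.1, d.2))

/-- A list of darts forms a walk in `G`. -/
def IsWalkList {V : Type*} (G : SimpleGraph V) (l : List (V × V)) : Prop :=
  (∀ d ∈ l, G.Adj d.1 d.2) ∧ l.Chain' (fun d d' => d.2 = d'.1)

/-- Number of occurrences (with multiplicity) at `v` of edges of the walk whose
membership in `M` is `inM`. -/
def occAt {V : Type*} [DecidableEq V] (M : Finset (Sym2 V)) (l : List (V × V)) (v : V)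
    (inM : Bool) : ℕ :=
  ((edgesOf l).filter (fun e => decide (e ∈ M) == inM)).countP (fun e => decide (v ∈ e))

/-- Properness of a walk at an endpoint `v`: `d_v^{W △ M} ≤ c_v`
(multiplicities of repeated edges counted). -/
def ProperEnd {V : Type*} [DecidableEq V] (M : Finset (Sym2 V)) (c : V → ℕ)
    (l : List (V × V)) (v : V) : Prop :=
  (degOn M v : ℤ) + (occAt M l v false : ℤ) - (occAt M l v true : ℤ) ≤ (c v : ℤ)

/-- The inverse of a dart-list walk. -/
def invWalk {V : Type*} (l : List (V × V)) : List (V × V) := (l.map Prod.swap).reverse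

/-! The gain `w(W \ M) − w(W ∩ M)` of a walk is additive along concatenation and invariant
under reversal. Writing `P = (P₁, Q, P₃)` with `Q = (e_s, P₂, e_t)`, the traceback `tb(P,u)` is
`(P₁, Q, P₁⁻¹)` and `tb(P,v)` is `((Q, P₃)⁻¹, P₃)`, so their gains are `g(P) − g(P₃) + g(P₁)`
and `g(P) − g(P₁) + g(P₃)`; whichever of `P₁`, `P₃` has the larger gain makes its traceback
gain at least `g(P) > 0`. -/

section Gain

variable [DecidableEq V] (w : Sym2 V → ℝ) (M : Finset (Sym2 V))

def gain (l : List (Sym2 V)) : ℝ := unmatchedWeight w M l - matchedWeight w M l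

variable {w M}

theorem augmenting_iff_gain_pos {l : List (Sym2 V)} : Augmenting w M l ↔ 0 < gain w M l :=
  sub_pos.symm

theorem gain_append (l₁ l₂ : List (Sym2 V)) :
    gain w M (l₁ ++ l₂) = gain w M l₁ + gain w M l₂ := by
  simp only [gain, unmatchedWeight, matchedWeight, List.filter_append, List.map_append,
    List.sum_append]
  ring

theorem gain_reverse (l : List (Sym2 V)) : gain w M l.reverse = gain w M l := by
  simp only [gain, unmatchedWeight, matchedWeight, List.filter_reverse, List.map_reverse,
    List.sum_reverse]

end Gain

theorem edgesOf_append (l₁ l₂ : List (V × V)) :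
    edgesOf (l₁ ++ l₂) = edgesOf l₁ ++ edgesOf l₂ :=
  List.map_append

theorem edgesOf_invWalk (l : List (V × V)) : edgesOf (invWalk l) = (edgesOf l).reverse := by
  simp [invWalk, edgesOf, Function.comp_def, Sym2.eq_swap]

theorem stmt6_general [DecidableEq V] (w : Sym2 V → ℝ) (M : Finset (Sym2 V))
    (P₁ P₂ P₃ : List (V × V)) (es et : V × V)
    (haug : Augmenting w M (edgesOf (P₁ ++ [es] ++ P₂ ++ [et] ++ P₃))) :
    (unmatchedWeight w M (edgesOf P₃) - matchedWeight w M (edgesOf P₃) ≤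
        unmatchedWeight w M (edgesOf P₁) - matchedWeight w M (edgesOf P₁) →
      Augmenting w M (edgesOf (P₁ ++ [es] ++ P₂ ++ [et] ++ invWalk P₁))) ∧
    (unmatchedWeight w M (edgesOf P₁) - matchedWeight w M (edgesOf P₁) <
        unmatchedWeight w M (edgesOf P₃) - matchedWeight w M (edgesOf P₃) →
      Augmenting w M
        (edgesOf (invWalk P₃ ++ [Prod.swap et] ++ invWalk P₂ ++ [Prod.swap es] ++ P₃))) := by
  set Q := [es] ++ P₂ ++ [et]
  have hP : P₁ ++ [es] ++ P₂ ++ [et] ++ P₃ = P₁ ++ Q ++ P₃ := by simp [Q]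
  have htbu : P₁ ++ [es] ++ P₂ ++ [et] ++ invWalk P₁ = P₁ ++ Q ++ invWalk P₁ := by simp [Q]
  have htbv : invWalk P₃ ++ [Prod.swap et] ++ invWalk P₂ ++ [Prod.swap es] ++ P₃ =
      invWalk (Q ++ P₃) ++ P₃ := by
    simp [Q, invWalk]
  rw [hP] at haug
  rw [htbu, htbv]
  simp only [augmenting_iff_gain_pos, edgesOf_append, edgesOf_invWalk, gain_append,
    gain_reverse] at haug ⊢
  exact ⟨fun (h : gain w M _ ≤ gain w M _) => by linarith,
    fun (h : gain w M _ < gain w M _) => by linarith⟩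

/-- for a feasible `M`-augmenting walk `P = (P₁, e_s, P₂, e_t, P₃)` with
distinct `M`-unsaturated endpoints, where `e_t` is the first edge repeated in the opposite
direction (`e_t = e_s⁻¹`), at least one of the tracebacks
`tb(P,u) = (P₁, e_s, P₂, e_t, P₁⁻¹)` and `tb(P,v) = (P₃⁻¹, e_t⁻¹, P₂⁻¹, e_s⁻¹, P₃)`
is `M`-augmenting: the first if `w(P₁ \ M) − w(P₁ ∩ M) ≥ w(P₃ \ M) − w(P₃ ∩ M)`,
and the second otherwise. -/
theorem stmt6 [Fintype V] [DecidableEq V] (G : SimpleGraph V) (w : Sym2 V → ℝ)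
    (hw : ∀ e, 0 ≤ w e) (c : V → ℕ) (M : Finset (Sym2 V)) (hM : IsCMatching G c M)
    (P₁ P₂ P₃ : List (V × V)) (es et : V × V) {u v : V}
    (hwalk : IsWalkList G (P₁ ++ [es] ++ P₂ ++ [et] ++ P₃))
    (hu : (P₁ ++ [es] ++ P₂ ++ [et] ++ P₃).head?.map Prod.fst = some u)
    (hv : (P₁ ++ [es] ++ P₂ ++ [et] ++ P₃).getLast?.map Prod.snd = some v)
    (huv : u ≠ v)
    (hus : degOn M u < c u) (hvs : degOn M v < c v)
    (halt : Alternating M (edgesOf (P₁ ++ [es] ++ P₂ ++ [et] ++ P₃)))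
    (haug : Augmenting w M (edgesOf (P₁ ++ [es] ++ P₂ ++ [et] ++ P₃)))
    -- `e_t` repeats `e_s` in the opposite direction, and is the first such repetition
    (hrep : et = Prod.swap es)
    (hfirst : (P₁ ++ [es] ++ P₂).Pairwise (fun d d' => d' ≠ Prod.swap d)) :
    (unmatchedWeight w M (edgesOf P₃) - matchedWeight w M (edgesOf P₃) ≤
        unmatchedWeight w M (edgesOf P₁) - matchedWeight w M (edgesOf P₁) →
      Augmenting w M (edgesOf (P₁ ++ [es] ++ P₂ ++ [et] ++ invWalk P₁))) ∧
    (unmatchedWeight w M (edgesOf P₁) - matchedWeight w M (edgesOf P₁) <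
        unmatchedWeight w M (edgesOf P₃) - matchedWeight w M (edgesOf P₃) →
      Augmenting w M
        (edgesOf (invWalk P₃ ++ [Prod.swap et] ++ invWalk P₂ ++ [Prod.swap es] ++ P₃))) :=
  stmt6_general w M P₁ P₂ P₃ es et haug
end

section
/- For the 4-vertex unit-weight graph G with vertices {a,b,c,d}, edges {ab, ac, bc, bd, cd}, and capacities c_a = c_b = c_c = 2, c_d = 1, the allocation y = (y_a, y_b, y_c, y_d) = (1,1,1,0) lies in the core of the capacitated cooperative matching game: Σ_{v∈V} y_v = ν^c(G) and Σ_{v∈S} y_v ≥ ν^c(G[S]) for every S ⊆ V. Hence there exists an unstable capacitated graph whose cooperative matching game has a nonempty core. -/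
variable {V : Type*}

/-- The 4-vertex graph on `{a,b,c,d} = {0,1,2,3}` with all edges except `ad`. -/
def counterG : SimpleGraph (Fin 4) :=
  SimpleGraph.fromRel (fun x y => s(x, y) ≠ s((0 : Fin 4), (3 : Fin 4)))

/-- Capacities `c_a = c_b = c_c = 2`, `c_d = 1`. -/
def counterCaps : Fin 4 → ℕ := ![2, 2, 2, 1]

/-!
With unit weights a `c`-matching has at most `⌊c(V)/2⌋` edges by the handshake lemma, so
`ν^c(G[S]) ≤ ⌊c(S)/2⌋` for every coalition `S`. The allocation is `y_v = ⌊c_v/2⌋`, and as `d` is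
the only vertex of odd capacity, `y(S) = ⌊c(S)/2⌋`; the matching `{ab, bc, cd}` shows
`ν^c(G) = 3 = y(V)`. Instability is witnessed by the fractional matching that is `1` on `ab`, `ac`
and `1/2` on `bc`, `bd`, `cd`, of value `7/2`.
-/

open Finset

section CMatching

variable [Fintype V] [DecidableEq V] {G : SimpleGraph V} {c : V → ℕ} {M : Finset (Sym2 V)}

/-- Handshake lemma for `c`-matchings. -/
lemma IsCMatching.two_mul_card_le (hM : IsCMatching G c M) : 2 * #M ≤ ∑ v, c v :=
  calc 2 * #M = ∑ e ∈ M, #(univ.bipartiteBelow (· ∈ ·) e) := by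
        rw [mul_comm, ← smul_eq_mul, ← sum_const]
        refine sum_congr rfl fun e he => ?_
        rw [← Sym2.card_toFinset_of_not_isDiag e (G.not_isDiag_of_mem_edgeSet (hM.1 e he))]
        congr 1
        ext v
        simp
    _ = ∑ v, degOn M v := (sum_card_bipartiteAbove_eq_sum_card_bipartiteBelow _).symm
    _ ≤ ∑ v, c v := sum_le_sum fun v _ => hM.2 v

lemma nuC_bddAbove (w : Sym2 V → ℝ) :
    BddAbove {r | ∃ M, IsCMatching G c M ∧ r = wsum w M} :=
  ((Set.finite_range (wsum w)).subset <| by rintro _ ⟨M, -, rfl⟩; exact ⟨M, rfl⟩).bddAbove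

lemma le_nuC (w : Sym2 V → ℝ) (hM : IsCMatching G c M) : wsum w M ≤ nuC G w c :=
  le_csSup (nuC_bddAbove w) ⟨M, hM, rfl⟩

lemma nuC_le {w : Sym2 V → ℝ} {b : ℝ} (h : ∀ M, IsCMatching G c M → wsum w M ≤ b) :
    nuC G w c ≤ b := by
  refine csSup_le ⟨wsum w ∅, ∅, ⟨by simp, fun v => by simp [degOn]⟩, rfl⟩ ?_
  rintro r ⟨M, hM, rfl⟩
  exact h M hM

lemma nuC_one_le_sum_div_two : nuC G (fun _ => 1) c ≤ ((∑ v, c v) / 2 : ℕ) :=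
  nuC_le fun M hM => by
    have hcard : #M ≤ (∑ v, c v) / 2 := by have := hM.two_mul_card_le; omega
    simpa [wsum] using hcard

end CMatching

section FracCMatching

variable [Fintype V] [DecidableEq V] {G : SimpleGraph V} {c : V → ℕ}

lemma nuF_bddAbove (w : Sym2 V → ℝ) :
    BddAbove {r | ∃ x, IsFracCMatching G c x ∧ r = lpVal w x} := by
  refine ⟨∑ e, |w e|, ?_⟩
  rintro r ⟨x, hx, rfl⟩
  refine sum_le_sum fun e _ => ?_
  have ⟨h0, h1⟩ := hx.1 e
  calc w e * x e ≤ |w e| * x e := by gcongr; exact le_abs_self _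
    _ ≤ |w e| * 1 := by gcongr
    _ = |w e| := mul_one _

lemma le_nuF (w : Sym2 V → ℝ) {x : Sym2 V → ℝ} (hx : IsFracCMatching G c x) :
    lpVal w x ≤ nuF G w c :=
  le_csSup (nuF_bddAbove w) ⟨x, hx, rfl⟩

/-- Half-integral fractional `c`-matchings, with conditions stated in `ℕ` so that they can be
checked by `decide`. -/
lemma isFracCMatching_half {n : Sym2 V → ℕ} (hle : ∀ e, n e ≤ 2)
    (hG : ∀ e, n e ≠ 0 → e ∈ G.edgeSet)
    (hdeg : ∀ v, ∑ e, (if v ∈ e then n e else 0) ≤ 2 * c v) :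
    IsFracCMatching G c (fun e => (n e : ℝ) / 2) := by
  refine ⟨fun e => ⟨by positivity, ?_⟩, fun e he => ?_, fun v => ?_⟩
  · rw [div_le_one two_pos]
    exact_mod_cast hle e
  · simp [not_imp_comm.mp (hG e) he]
  · have hdeg' : ((∑ e, (if v ∈ e then n e else 0) : ℕ) : ℝ) ≤ 2 * c v := by
      exact_mod_cast hdeg v
    calc lpDeg (fun e => (n e : ℝ) / 2) v
        = ((∑ e, (if v ∈ e then n e else 0) : ℕ) : ℝ) / 2 := by
          push_cast
          rw [lpDeg, sum_div]
          simp only [ite_div, zero_div]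
      _ ≤ c v := by linarith

end FracCMatching

lemma counterG_adj {x y : Fin 4} : counterG.Adj x y ↔ x ≠ y ∧ s(x, y) ≠ s(0, 3) := by
  rw [counterG, SimpleGraph.fromRel_adj, Sym2.eq_swap (a := y), or_self]

instance : DecidableRel counterG.Adj := fun _ _ => decidable_of_iff _ counterG_adj.symm

lemma sum_counterCaps : ∑ v, counterCaps v = 7 := by decide

lemma nuC_counterG : nuC counterG (fun _ => 1) counterCaps = 3 := by
  let M : Finset (Sym2 (Fin 4)) := {s(0, 1), s(1, 2), s(2, 3)}
  have hM : IsCMatching counterG counterCaps M := ⟨by decide, by decide⟩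
  refine le_antisymm (nuC_one_le_sum_div_two.trans ?_) ?_
  · simp [sum_counterCaps]
  · calc (3 : ℝ) = wsum (fun _ => 1) M := by simp [wsum, show #M = 3 by decide]
      _ ≤ _ := le_nuC _ hM

lemma nuF_counterG_ge : 7 / 2 ≤ nuF counterG (fun _ => 1) counterCaps := by
  let n : Sym2 (Fin 4) → ℕ := fun e =>
    if e = s(0, 1) ∨ e = s(0, 2) then 2
    else if e = s(1, 2) ∨ e = s(1, 3) ∨ e = s(2, 3) then 1 else 0
  have hx : IsFracCMatching counterG counterCaps (fun e => (n e : ℝ) / 2) :=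
    isFracCMatching_half (by decide) (by decide) (by decide)
  calc (7 / 2 : ℝ) = ((∑ e, n e : ℕ) : ℝ) / 2 := by rw [show ∑ e, n e = 7 by decide]; norm_num
    _ = lpVal (fun _ => 1) (fun e => (n e : ℝ) / 2) := by simp [lpVal, sum_div]
    _ ≤ _ := le_nuF _ hx

lemma allocation_eq : (![1, 1, 1, 0] : Fin 4 → ℝ) = fun v => ((counterCaps v / 2 : ℕ) : ℝ) := by
  funext v
  fin_cases v <;> simp [counterCaps]

lemma sum_counterCaps_div_two (S : Finset (Fin 4)) :
    (∑ v ∈ S, counterCaps v) / 2 = ∑ v ∈ S, counterCaps v / 2 := by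
  revert S
  decide

/-- for the unstable capacitated graph of Statement 10 with unit weights,
the allocation `y = (1,1,1,0)` is in the core of the capacitated cooperative matching game:
it is nonnegative, distributes exactly `ν^c(G)`, and every coalition `S` receives at least
`ν^c(G[S])`. Hence there is an unstable capacitated graph whose cooperative matching game
has a nonempty core. -/
theorem stmt11 :
    (∀ v, 0 ≤ (![1, 1, 1, 0] : Fin 4 → ℝ) v) ∧
    (∑ v : Fin 4, (![1, 1, 1, 0] : Fin 4 → ℝ) v = nuC counterG (fun _ => 1) counterCaps) ∧
    (∀ S : Finset (Fin 4),
      nuC (counterG.induce (↑S : Set (Fin 4))) (fun _ => 1) (fun v => counterCaps v.1) ≤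
        ∑ v ∈ S, (![1, 1, 1, 0] : Fin 4 → ℝ) v) ∧
    ¬ Stable counterG (fun _ => 1) counterCaps := by
  simp only [allocation_eq, Stable, nuC_counterG, ← Nat.cast_sum, ← sum_counterCaps_div_two]
  refine ⟨fun v => Nat.cast_nonneg _, by simp [sum_counterCaps], fun S => ?_, ?_⟩
  · refine nuC_one_le_sum_div_two.trans_eq ?_
    rw [sum_set_coe (f := counterCaps) (s := (S : Set (Fin 4)))]
    simp
  · intro h
    linarith [nuF_counterG_ge]
end

section
/- Removing vertices commutes with the auxiliary construction: if [(G,w,c), M] has auxiliary construction [(G',w',1), M'], and X ⊆ V(G) is a set of vertices none of which is covered by M, then the auxiliary graph of (G \ X, M) equals G' \ X', where X' = ∪_{v ∈ X} C_v is the union of all copies of vertices in X. -/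
variable {V : Type*}

/-- removing vertices commutes with the auxiliary construction. The auxiliary
graph of `[(G, w, c), M]` lives on `Σ v, Fin (c v)` (the copies `C_v`), has the edges of
`M'` together with all lifts of unmatched edges of `G`; if `X` is a set of vertices none of
which is covered by `M`, then the auxiliary graph of `(G \ X, M)` equals `G' \ X'` where
`X' = ⋃_{v ∈ X} C_v`. -/
theorem stmt15 [DecidableEq V] (G : SimpleGraph V) (c : V → ℕ) (M : Finset (Sym2 V))
    (M' : Finset (Sym2 (Σ v : V, Fin (c v))))
    -- edges of `M'` project into `M`
    (hproj : ∀ e ∈ M', Sym2.map (fun a : Σ v : V, Fin (c v) => a.1) e ∈ M)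
    (X : Set V) (hX : ∀ v ∈ X, ∀ e ∈ M, v ∉ e) :
    ∀ a b : Σ v : V, Fin (c v),
      -- the auxiliary graph of `G \ X` ...
      (SimpleGraph.fromRel (fun a b : Σ v : V, Fin (c v) =>
          s(a, b) ∈ M' ∨
            ((G.Adj a.1 b.1 ∧ a.1 ∉ X ∧ b.1 ∉ X) ∧ s(a.1, b.1) ∉ M))).Adj a b ↔
      -- ... equals the auxiliary graph `G'` of `G` with all copies of `X` removed
      ((SimpleGraph.fromRel (fun a b : Σ v : V, Fin (c v) =>
          s(a, b) ∈ M' ∨ (G.Adj a.1 b.1 ∧ s(a.1, b.1) ∉ M))).Adj a b ∧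
        a.1 ∉ X ∧ b.1 ∉ X) := by
  intro a b
  have key : ∀ x y : Σ v : V, Fin (c v), s(x, y) ∈ M' → x.1 ∉ X ∧ y.1 ∉ X := by
    intro x y h
    have hm := hproj _ h
    simp only [Sym2.map_pair_eq] at hm
    constructor
    · intro hx; exact hX _ hx _ hm (Sym2.mem_mk_left _ _)
    · intro hy; exact hX _ hy _ hm (Sym2.mem_mk_right _ _)
  have swap : ∀ x y : V, s(x, y) ∉ M → s(y, x) ∉ M := by
    intro x y h hmem; rw [Sym2.eq_swap] at hmem; exact h hmem
  simp only [SimpleGraph.fromRel_adj]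
  constructor
  · rintro ⟨hne, h | h⟩
    · rcases h with h | ⟨⟨hG, hx, hy⟩, hm⟩
      · exact ⟨⟨hne, Or.inl (Or.inl h)⟩, key _ _ h⟩
      · exact ⟨⟨hne, Or.inl (Or.inr ⟨hG, hm⟩)⟩, hx, hy⟩
    · rcases h with h | ⟨⟨hG, hy, hx⟩, hm⟩
      · have := key _ _ h
        exact ⟨⟨hne, Or.inr (Or.inl h)⟩, this.2, this.1⟩
      · exact ⟨⟨hne, Or.inr (Or.inr ⟨hG, hm⟩)⟩, hx, hy⟩
  · rintro ⟨⟨hne, h | h⟩, hx, hy⟩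
    · rcases h with h | ⟨hG, hm⟩
      · exact ⟨hne, Or.inl (Or.inl h)⟩
      · exact ⟨hne, Or.inl (Or.inr ⟨⟨hG, hx, hy⟩, hm⟩)⟩
    · rcases h with h | ⟨hG, hm⟩
      · exact ⟨hne, Or.inr (Or.inl h)⟩
      · exact ⟨hne, Or.inr (Or.inr ⟨⟨hG, hy, hx⟩, hm⟩)⟩
end
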